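/- arXiv:1703.06045 — 2 statements merged into one kernel-verified Lean document; each statement's English description precedes it below -/
import Mathlib

section
/- Let n ≥ 3 and let φ be a CNF formula over Boolean variables indexed by Fin n consisting of m ≥ 1 clauses, each clause given by an injection c_i : Fin 3 → Fin n and signs σ_i : Fin 3 → Bool, and let S(x) = (1/(7m)) · Σ_{i} Σ_{a : Fin 3 → Bool satisfying clause i} Π_{j ∈ Fin n} w_{i,a}(j, x j), where w_{i,a}(j,b) equals (if b = a k then 1 else 0) when j = c_i k for some k, and 1/2 otherwise. Then φ is satisfiable (some x : Fin n → Bool satisfies all m clauses) if and only if max_{x} S(x) ≥ 2^{3−n}/7; moreover, if φ is unsatisfiable then max_{x} S(x) ≤ (m−1) · 2^{3−n} / (7m). -/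
/-!
Only the satisfying assignment `a = x ∘ c_i` of clause `i` contributes to the inner sum, with weight
`1` on the three variables of the clause and `1/2` on each of the other `n - 3`. Hence
`S(x) = N(x) · 2^(3-n) / (7m)`, where `N(x)` is the number of clauses satisfied by `x`, and both
claims reduce to comparing the maximum of `N` with `m`.
-/

/-- The leaf weight `w_{i,a}(j,b)` for a clause with variables `c : Fin 3 → Fin n` and a
partial assignment `a : Fin 3 → Bool`: it equals `if b = a k then 1 else 0` when `j = c k`
for some `k`, and `1/2` otherwise. -/
noncomputable def wfun {n : ℕ} (c : Fin 3 → Fin n) (a : Fin 3 → Bool)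
    (j : Fin n) (b : Bool) : ℝ :=
  if h : ∃ k, c k = j then (if b = a h.choose then 1 else 0) else 1 / 2

/-- The SPN value `S(x) = (1/(7m)) · Σ_i Σ_{a satisfying clause i} Π_j w_{i,a}(j, x j)`. -/
noncomputable def SCnf (n m : ℕ) (c : Fin m → Fin 3 → Fin n) (σ : Fin m → Fin 3 → Bool)
    (x : Fin n → Bool) : ℝ :=
  (1 / (7 * m)) * ∑ i, ∑ a ∈ Finset.univ.filter (fun a : Fin 3 → Bool => ∃ k, a k = σ i k),
    ∏ j, wfun (c i) a j (x j)

open Finset Function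

lemma wfun_apply_of_injective {n : ℕ} {c : Fin 3 → Fin n} (hc : Injective c)
    (a : Fin 3 → Bool) (k : Fin 3) (b : Bool) :
    wfun c a (c k) b = if b = a k then 1 else 0 := by
  have h : ∃ k', c k' = c k := ⟨k, rfl⟩
  rw [wfun, dif_pos h, hc h.choose_spec]

lemma wfun_of_notMem_range {n : ℕ} {c : Fin 3 → Fin n} (a : Fin 3 → Bool) {j : Fin n}
    (hj : j ∉ Set.range c) (b : Bool) : wfun c a j b = 1 / 2 :=
  dif_neg hj

lemma prod_wfun_eq {n : ℕ} {c : Fin 3 → Fin n} (hc : Injective c)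
    (a : Fin 3 → Bool) (x : Fin n → Bool) :
    ∏ j, wfun c a j (x j) = if x ∘ c = a then (2 : ℝ) ^ ((3 : ℤ) - n) else 0 := by
  classical
  have h3n : 3 ≤ n := by simpa using Fintype.card_le_of_injective c hc
  set s := univ.map ⟨c, hc⟩
  have hs : ∏ j ∈ s, wfun c a j (x j) = if x ∘ c = a then 1 else 0 := by
    simp only [s, prod_map, Embedding.coeFn_mk, wfun_apply_of_injective hc, prod_boole,
      mem_univ, true_implies, funext_iff, comp_apply]
  have hsc : ∏ j ∈ sᶜ, wfun c a j (x j) = (2 : ℝ) ^ ((3 : ℤ) - n) := by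
    rw [prod_congr rfl fun j hj => wfun_of_notMem_range a (by simpa [s] using hj) (x j),
      prod_const, card_compl, card_map, card_univ, Fintype.card_fin, Fintype.card_fin,
      show (3 : ℤ) - n = -((n - 3 : ℕ) : ℤ) by omega, zpow_neg, zpow_natCast, one_div, inv_pow]
  rw [← prod_mul_prod_compl s, hs, hsc]
  split_ifs <;> simp

def numSatClauses {n m : ℕ} (c : Fin m → Fin 3 → Fin n) (σ : Fin m → Fin 3 → Bool)
    (x : Fin n → Bool) : ℕ :=
  #{i | ∃ k, x (c i k) = σ i k}

lemma numSatClauses_le {n m : ℕ} (c : Fin m → Fin 3 → Fin n) (σ : Fin m → Fin 3 → Bool)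
    (x : Fin n → Bool) : numSatClauses c σ x ≤ m := by
  simpa [numSatClauses] using card_filter_le (univ : Finset (Fin m)) _

lemma numSatClauses_eq_iff {n m : ℕ} (c : Fin m → Fin 3 → Fin n) (σ : Fin m → Fin 3 → Bool)
    (x : Fin n → Bool) : numSatClauses c σ x = m ↔ ∀ i, ∃ k, x (c i k) = σ i k := by
  simpa [numSatClauses] using
    card_filter_eq_iff (s := univ) (p := fun i => ∃ k, x (c i k) = σ i k)

lemma SCnf_eq {n m : ℕ} {c : Fin m → Fin 3 → Fin n} (hc : ∀ i, Injective (c i))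
    (σ : Fin m → Fin 3 → Bool) (x : Fin n → Bool) :
    SCnf n m c σ x = numSatClauses c σ x * ((2 : ℝ) ^ ((3 : ℤ) - n) / (7 * m)) := by
  classical
  simp only [SCnf, prod_wfun_eq (hc _), sum_ite_eq, mem_filter, mem_univ, true_and,
    comp_apply, ← sum_filter, sum_const, nsmul_eq_mul, numSatClauses]
  ring

theorem stmt7_general (n m : ℕ) (hm : 1 ≤ m)
    (c : Fin m → Fin 3 → Fin n) (hc : ∀ i, Function.Injective (c i))
    (σ : Fin m → Fin 3 → Bool) :
    ((∃ x : Fin n → Bool, ∀ i, ∃ k, x (c i k) = σ i k) ↔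
        (2 : ℝ) ^ ((3 : ℤ) - n) / 7 ≤ ⨆ x : Fin n → Bool, SCnf n m c σ x) ∧
    ((¬ ∃ x : Fin n → Bool, ∀ i, ∃ k, x (c i k) = σ i k) →
        (⨆ x : Fin n → Bool, SCnf n m c σ x) ≤
          ((m : ℝ) - 1) * (2 : ℝ) ^ ((3 : ℤ) - n) / (7 * m)) := by
  set κ : ℝ := (2 : ℝ) ^ ((3 : ℤ) - n) / (7 * m)
  have hκ : 0 < κ := by positivity
  have hS : ∀ x, SCnf n m c σ x = numSatClauses c σ x * κ := SCnf_eq hc σ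
  obtain ⟨x₀, hx₀⟩ := exists_eq_ciSup_of_finite (f := SCnf n m c σ)
  have hmax : ∀ x, numSatClauses c σ x ≤ numSatClauses c σ x₀ := fun x => by
    have := le_ciSup (Finite.bddAbove_range (SCnf n m c σ)) x
    rw [← hx₀, hS, hS] at this
    exact_mod_cast le_of_mul_le_mul_right this hκ
  have hsat : (∃ x : Fin n → Bool, ∀ i, ∃ k, x (c i k) = σ i k) ↔
      numSatClauses c σ x₀ = m := by
    simp_rw [← numSatClauses_eq_iff]
    exact ⟨fun ⟨x, hx⟩ => le_antisymm (numSatClauses_le c σ x₀) (hx.ge.trans (hmax x)),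
      fun h => ⟨x₀, h⟩⟩
  have hthreshold : (2 : ℝ) ^ ((3 : ℤ) - n) / 7 = m * κ := by
    have : (m : ℝ) ≠ 0 := by positivity
    simp only [κ]
    field_simp
  rw [← hx₀, hS, hsat, hthreshold, mul_le_mul_iff_left₀ hκ, mul_div_assoc]
  refine ⟨⟨fun h => by rw [h], fun h => ?_⟩, fun h => ?_⟩
  · exact le_antisymm (numSatClauses_le c σ x₀) (by exact_mod_cast h)
  · have : numSatClauses c σ x₀ + 1 ≤ m := lt_of_le_of_ne (numSatClauses_le c σ x₀) h
    gcongr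
    rw [le_sub_iff_add_le]
    exact_mod_cast this

/-- `φ` is satisfiable iff `max_x S(x) ≥ 2^(3−n)/7`; moreover, if `φ` is
unsatisfiable then `max_x S(x) ≤ (m−1) · 2^(3−n) / (7m)`. -/
theorem stmt7 (n m : ℕ) (hn : 3 ≤ n) (hm : 1 ≤ m)
    (c : Fin m → Fin 3 → Fin n) (hc : ∀ i, Function.Injective (c i))
    (σ : Fin m → Fin 3 → Bool) :
    ((∃ x : Fin n → Bool, ∀ i, ∃ k, x (c i k) = σ i k) ↔
        (2 : ℝ) ^ ((3 : ℤ) - n) / 7 ≤ ⨆ x : Fin n → Bool, SCnf n m c σ x) ∧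
    ((¬ ∃ x : Fin n → Bool, ∀ i, ∃ k, x (c i k) = σ i k) →
        (⨆ x : Fin n → Bool, SCnf n m c σ x) ≤
          ((m : ℝ) - 1) * (2 : ℝ) ^ ((3 : ℤ) - n) / (7 * m)) :=
  stmt7_general n m hm c hc σ
end

section
/- Fix a finite index set ι and for each i ∈ ι a finite nonempty type α i, and consider SPNs over ι as defined inductively (Leaf, Sum with convex weights, Prod over disjoint scopes), with D(S) the product, over all Sum nodes occurring in S, of the number of children of that node. Then for every SPN S there exists a configuration x̃ : ∀ i, α i such that S(x̃) · D(S) ≥ max over configurations x of S(x). -/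
/-!
The max-product value `S.pd` sits between the two sides. On one hand it is attained: following
the maximising child at every sum node and gluing the children's configurations at product nodes
(their scopes are disjoint) yields `x̃` with `S.pd ≤ S(x̃)`. On the other hand every value `S(x)`
is at most `D(S) · S.pd`, since a sum node with `t` children is at most `t` times its largest
weighted child.
-/

open scoped NNReal

/-- Sum-product networks over index set `ι` with variable domains `α i`, indexed by scope. -/
inductive SPN (ι : Type) (α : ι → Type) : Set ι → Type where
  | leaf (i : ι) (p : α i → ℝ≥0) : SPN ι α {i}
  | sum {sc : Set ι} (t : ℕ) (ht : 1 ≤ t) (child : Fin t → SPN ι α sc)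
      (w : Fin t → ℝ≥0) (hw : ∑ j, w j = 1) : SPN ι α sc
  | prod (t : ℕ) (scs : Fin t → Set ι)
      (hd : Pairwise fun j k => Disjoint (scs j) (scs k))
      (child : ∀ j, SPN ι α (scs j)) : SPN ι α (⋃ j, scs j)

/-- The value of an SPN at a configuration. -/
noncomputable def SPN.eval {ι : Type} {α : ι → Type} :
    {sc : Set ι} → SPN ι α sc → (∀ i, α i) → ℝ≥0
  | _, .leaf i p, x => p (x i)
  | _, .sum _ _ child w _, x => ∑ j, w j * (child j).eval x
  | _, .prod _ _ _ child, x => ∏ j, (child j).eval x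

/-- The upward pass of the max-product algorithm. -/
noncomputable def SPN.pd {ι : Type} {α : ι → Type} :
    {sc : Set ι} → SPN ι α sc → ℝ≥0
  | _, .leaf _ p => ⨆ v, p v
  | _, .sum _ _ child w _ => ⨆ j, w j * (child j).pd
  | _, .prod _ _ _ child => ∏ j, (child j).pd

/-- The product over all sum nodes of the number of their children. -/
def SPN.D {ι : Type} {α : ι → Type} :
    {sc : Set ι} → SPN ι α sc → ℕ
  | _, .leaf _ _ => 1
  | _, .sum t _ child _ _ => t * ∏ j, (child j).D
  | _, .prod _ _ _ child => ∏ j, (child j).D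

theorem exists_forall_mem_eq_of_pairwise_disjoint {ι κ : Type*} {α : ι → Type*}
    [∀ i, Nonempty (α i)] (s : κ → Set ι) (hs : Pairwise fun j k => Disjoint (s j) (s k))
    (x : κ → ∀ i, α i) : ∃ y : ∀ i, α i, ∀ j, ∀ i ∈ s j, y i = x j i := by
  classical
  refine ⟨fun i => if h : ∃ j, i ∈ s j then x h.choose i else Classical.arbitrary _, ?_⟩
  intro j i hi
  have hex : ∃ j, i ∈ s j := ⟨j, hi⟩
  have hj : hex.choose = j := by
    by_contra hne
    exact (hs hne).le_bot ⟨hex.choose_spec, hi⟩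
  simp only [dif_pos hex, hj]

namespace SPN

variable {ι : Type} {α : ι → Type}

lemma one_le_D {sc : Set ι} (S : SPN ι α sc) : 1 ≤ S.D := by
  induction S with
  | leaf i p => simp [D]
  | sum t ht child w hw ih => exact Nat.mul_pos ht (Finset.prod_pos fun j _ => ih j)
  | prod t scs hd child ih => exact Finset.one_le_prod' fun j _ => ih j

lemma eval_congr {sc : Set ι} (S : SPN ι α sc) {x y : ∀ i, α i}
    (h : ∀ i ∈ sc, x i = y i) : S.eval x = S.eval y := by
  induction S with
  | leaf i p => simp [eval, h i rfl]
  | sum t ht child w hw ih => exact Finset.sum_congr rfl fun j _ => by rw [ih j h]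
  | prod t scs hd child ih =>
    exact Finset.prod_congr rfl fun j _ => ih j fun i hi => h i (Set.mem_iUnion.2 ⟨j, hi⟩)

lemma eval_le_D_mul_pd [∀ i, Finite (α i)] {sc : Set ι} (S : SPN ι α sc) (x : ∀ i, α i) :
    S.eval x ≤ S.D * S.pd := by
  induction S with
  | leaf i p =>
    simpa [eval, D, pd] using le_ciSup (Set.finite_range p).bddAbove (x i)
  | sum t ht child w hw ih =>
    have hchild : ∀ j, w j * (child j).pd ≤ (sum t ht child w hw).pd := fun j =>
      le_ciSup (Set.finite_range fun j => w j * (child j).pd).bddAbove j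
    have hD : ∀ j, ((child j).D : ℝ≥0) ≤ ∏ k, ((child k).D : ℝ≥0) := fun j => by
      exact_mod_cast Finset.single_le_prod' (fun k _ => one_le_D (child k)) (Finset.mem_univ j)
    calc (sum t ht child w hw).eval x
        = ∑ j, w j * (child j).eval x := rfl
      _ ≤ ∑ _j : Fin t, (∏ k, ((child k).D : ℝ≥0)) * (sum t ht child w hw).pd := by
        refine Finset.sum_le_sum fun j _ => ?_
        calc w j * (child j).eval x
            ≤ w j * ((child j).D * (child j).pd) := mul_le_mul_right (ih j) _
          _ = (child j).D * (w j * (child j).pd) := by ring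
          _ ≤ _ := mul_le_mul' (hD j) (hchild j)
      _ = (sum t ht child w hw).D * (sum t ht child w hw).pd := by
        simp only [Finset.sum_const, Finset.card_univ, Fintype.card_fin, nsmul_eq_mul, D]
        push_cast
        ring
  | prod t scs hd child ih =>
    calc (prod t scs hd child).eval x
        = ∏ j, (child j).eval x := rfl
      _ ≤ ∏ j, ((child j).D * (child j).pd) := Finset.prod_le_prod' fun j _ => ih j
      _ = (prod t scs hd child).D * (prod t scs hd child).pd := by
        simp only [Finset.prod_mul_distrib, D, pd]
        push_cast
        rfl

lemma exists_pd_le_eval [∀ i, Finite (α i)] [∀ i, Nonempty (α i)] {sc : Set ι}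
    (S : SPN ι α sc) : ∃ x : ∀ i, α i, S.pd ≤ S.eval x := by
  induction S with
  | leaf i p =>
    classical
    obtain ⟨v, hv⟩ := Finite.exists_max p
    exact ⟨Function.update (Classical.arbitrary _) i v, by simpa [eval, pd] using ciSup_le hv⟩
  | sum t ht child w hw ih =>
    choose x hx using ih
    have : Nonempty (Fin t) := ⟨⟨0, ht⟩⟩
    obtain ⟨j, hj⟩ := Finite.exists_max fun j => w j * (child j).pd
    refine ⟨x j, ?_⟩
    calc (sum t ht child w hw).pd
        ≤ w j * (child j).pd := ciSup_le hj
      _ ≤ w j * (child j).eval (x j) := mul_le_mul_right (hx j) _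
      _ ≤ ∑ k, w k * (child k).eval (x j) :=
        Finset.single_le_sum (f := fun k => w k * (child k).eval (x j))
          (fun _ _ => zero_le) (Finset.mem_univ j)
  | prod t scs hd child ih =>
    choose x hx using ih
    obtain ⟨y, hy⟩ := exists_forall_mem_eq_of_pairwise_disjoint scs hd x
    refine ⟨y, Finset.prod_le_prod' fun j _ => ?_⟩
    rw [eval_congr (child j) (hy j)]
    exact hx j

end SPN

theorem stmt14_general {ι : Type} {α : ι → Type}
    [∀ i, Fintype (α i)] [∀ i, Nonempty (α i)]
    {sc : Set ι} (S : SPN ι α sc) :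
    ∃ xt : ∀ i, α i, (⨆ x : ∀ i, α i, S.eval x) ≤ S.eval xt * (S.D : ℝ≥0) := by
  obtain ⟨xt, hxt⟩ := S.exists_pd_le_eval
  refine ⟨xt, ciSup_le fun x => ?_⟩
  calc S.eval x ≤ S.D * S.pd := S.eval_le_D_mul_pd x
    _ ≤ S.D * S.eval xt := mul_le_mul_right hxt _
    _ = S.eval xt * S.D := mul_comm _ _

/-- For every SPN `S` there is a configuration `x̃` such that
`S(x̃) · D(S) ≥ max_x S(x)`. -/
theorem stmt14 {ι : Type} [Fintype ι] [DecidableEq ι] {α : ι → Type}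
    [∀ i, Fintype (α i)] [∀ i, Nonempty (α i)]
    {sc : Set ι} (S : SPN ι α sc) :
    ∃ xt : ∀ i, α i, (⨆ x : ∀ i, α i, S.eval x) ≤ S.eval xt * (S.D : ℝ≥0) :=
  stmt14_general S
end
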